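/- arXiv:1303.4199 — 10 statements merged into one kernel-verified Lean document; each statement's English description precedes it below -/
import Mathlib

section
/- In the asymmetric-information two-ISP linear demand game (ISP_1 observes θ, ISP_2 does not), the unique equilibrium is p_1(θ) = D(θ)/(2α) + β E[D(θ)]/(2α(2α - β)) and p_2 = E[D(θ)]/(2α - β), with equilibrium expected utilities E[U_1] = E[D(θ)²]/(4α) + β(4α - β) E[D(θ)]²/(4α(2α - β)²) and E[U_2] = α E[D(θ)]²/(2α - β)². -/
/-!
With `a ≥ 0`, the revenue `(a - α q) q = (a² - (2α q - a)²) / (4α)` is maximized over `q ≥ 0`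
exactly at `q = a / (2α)`. Hence ISP₁'s best response is `p₁ θ = (D θ + β p₂) / (2α)`, and, as
ISP₂'s expected payoff is `(E[D] + β E[p₁] - α q) q`, its best response is
`p₂ = (E[D] + β E[p₁]) / (2α)`. Averaging the first equation gives `E[p₁] = (E[D] + β p₂) / (2α)`,
and substituting into the second leaves `(2α + β) ((2α - β) p₂ - E[D]) = 0`, so
`p₂ = E[D] / (2α - β)`. The utilities are then direct computations.
-/

open Finset

lemma forall_revenue_le_iff {a α x : ℝ} (hα : 0 < α) (ha : 0 ≤ a) :
    (∀ q, 0 ≤ q → (a - α * q) * q ≤ (a - α * x) * x) ↔ x = a / (2 * α) := by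
  have hrevenue (y : ℝ) : (a - α * y) * y = (a ^ 2 - (2 * α * y - a) ^ 2) / (4 * α) := by
    field_simp
    ring
  have hpeak : 2 * α * (a / (2 * α)) - a = 0 := by field_simp; ring
  simp only [hrevenue, div_le_div_iff_of_pos_right (by positivity : 0 < 4 * α),
    sub_le_sub_iff_left]
  constructor
  · intro h
    have hsq := h (a / (2 * α)) (by positivity)
    rw [hpeak, zero_pow two_ne_zero, sq_nonpos_iff, sub_eq_zero] at hsq
    rw [eq_div_iff (by positivity), ← hsq]
    ring
  · rintro rfl q -
    rw [hpeak, zero_pow two_ne_zero]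
    positivity

section WeightedSums

variable {Θ : Type*} [Fintype Θ] {P : Θ → ℝ}

lemma sum_mul_affine (hP : ∑ θ, P θ = 1) (f : Θ → ℝ) (u v : ℝ) :
    ∑ θ, P θ * (u * f θ + v) = u * ∑ θ, P θ * f θ + v := by
  simp only [mul_add, sum_add_distrib, mul_sum, ← sum_mul, hP, one_mul, mul_left_comm]

lemma sum_mul_quadratic (hP : ∑ θ, P θ = 1) (f : Θ → ℝ) (u v w : ℝ) :
    ∑ θ, P θ * (u * f θ ^ 2 + v * f θ + w) =
      u * ∑ θ, P θ * f θ ^ 2 + v * ∑ θ, P θ * f θ + w := by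
  simp only [mul_add, sum_add_distrib, mul_sum, ← sum_mul, hP, one_mul, mul_left_comm]

lemma sum_mul_revenue (hP : ∑ θ, P θ = 1) (D p : Θ → ℝ) (α β q : ℝ) :
    ∑ θ, P θ * ((D θ - α * q + β * p θ) * q) =
      (∑ θ, P θ * D θ + β * ∑ θ, P θ * p θ - α * q) * q := by
  calc ∑ θ, P θ * ((D θ - α * q + β * p θ) * q)
      = ∑ θ, (q * (P θ * D θ) + β * q * (P θ * p θ) - α * q ^ 2 * P θ) :=
        sum_congr rfl fun θ _ => by ring
    _ = _ := by rw [sum_sub_distrib, sum_add_distrib, ← mul_sum, ← mul_sum, ← mul_sum, hP]; ring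

end WeightedSums

section Game

variable {Θ : Type*} {D p₁ : Θ → ℝ} {α β p₂ : ℝ}

lemma forall_payoff₁_le_iff (hD : ∀ θ, 0 ≤ D θ) (hβ : 0 ≤ β) (hα : 0 < α) (hp₂ : 0 ≤ p₂) :
    (∀ θ, ∀ q, 0 ≤ q → (D θ - α * q + β * p₂) * q ≤ (D θ - α * p₁ θ + β * p₂) * p₁ θ) ↔
      ∀ θ, p₁ θ = (D θ + β * p₂) / (2 * α) :=
  forall_congr' fun θ => by
    simpa only [sub_add_eq_add_sub] using
      forall_revenue_le_iff hα (add_nonneg (hD θ) (mul_nonneg hβ hp₂))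

lemma bestResponse₁_and_eq_iff (hα : α ≠ 0) (hαβ : 2 * α - β ≠ 0) (e : ℝ) :
    ((∀ θ, p₁ θ = (D θ + β * p₂) / (2 * α)) ∧ p₂ = e / (2 * α - β)) ↔
      (∀ θ, p₁ θ = D θ / (2 * α) + β * e / (2 * α * (2 * α - β))) ∧ p₂ = e / (2 * α - β) :=
  and_congr_left fun h₂ => forall_congr' fun θ => by
    rw [h₂, show (D θ + β * (e / (2 * α - β))) / (2 * α) =
      D θ / (2 * α) + β * e / (2 * α * (2 * α - β)) by field_simp]

variable [Fintype Θ] {P : Θ → ℝ}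

lemma sum_mul_of_bestResponse₁ (hP : ∑ θ, P θ = 1)
    (h₁ : ∀ θ, p₁ θ = (D θ + β * p₂) / (2 * α)) :
    ∑ θ, P θ * p₁ θ = (∑ θ, P θ * D θ + β * p₂) / (2 * α) := by
  calc ∑ θ, P θ * p₁ θ = ∑ θ, P θ * ((2 * α)⁻¹ * D θ + β * p₂ / (2 * α)) :=
        sum_congr rfl fun θ _ => by rw [h₁]; ring
    _ = _ := by rw [sum_mul_affine hP]; ring

lemma forall_expectedPayoff₂_le_iff (hP : ∑ θ, P θ = 1) (hP₀ : ∀ θ, 0 ≤ P θ)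
    (hD : ∀ θ, 0 ≤ D θ) (hβ : 0 ≤ β) (hαβ : β < α) (hp₂ : 0 ≤ p₂)
    (h₁ : ∀ θ, p₁ θ = (D θ + β * p₂) / (2 * α)) :
    (∀ q, 0 ≤ q → ∑ θ, P θ * ((D θ - α * q + β * p₁ θ) * q) ≤
        ∑ θ, P θ * ((D θ - α * p₂ + β * p₁ θ) * p₂)) ↔
      p₂ = (∑ θ, P θ * D θ) / (2 * α - β) := by
  have hα : 0 < α := hβ.trans_lt hαβ
  set E := ∑ θ, P θ * D θ
  have hE : 0 ≤ E := sum_nonneg fun θ _ => mul_nonneg (hP₀ θ) (hD θ)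
  simp only [sum_mul_revenue hP, sum_mul_of_bestResponse₁ hP h₁]
  rw [forall_revenue_le_iff hα (by positivity)]
  have hsub : p₂ - (E + β * ((E + β * p₂) / (2 * α))) / (2 * α) =
      (2 * α + β) * (p₂ * (2 * α - β) - E) / (2 * α) ^ 2 := by
    field_simp
    ring
  have h₀ : (2 * α) ^ 2 ≠ 0 := by positivity
  have hβα : 2 * α + β ≠ 0 := by positivity
  rw [← sub_eq_zero, hsub, div_eq_zero_iff, or_iff_left h₀, mul_eq_zero, or_iff_right hβα,
    sub_eq_zero, eq_div_iff (by linarith)]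

lemma sum_mul_payoff₁_of_equilibrium (hP : ∑ θ, P θ = 1) (hα : α ≠ 0) (hαβ : 2 * α - β ≠ 0)
    (h₁ : ∀ θ, p₁ θ = (D θ + β * p₂) / (2 * α)) (h₂ : p₂ = (∑ θ, P θ * D θ) / (2 * α - β)) :
    ∑ θ, P θ * ((D θ - α * p₁ θ + β * p₂) * p₁ θ) =
      (∑ θ, P θ * D θ ^ 2) / (4 * α) +
        β * (4 * α - β) * (∑ θ, P θ * D θ) ^ 2 / (4 * α * (2 * α - β) ^ 2) := by
  calc ∑ θ, P θ * ((D θ - α * p₁ θ + β * p₂) * p₁ θ)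
      = ∑ θ, P θ * ((4 * α)⁻¹ * D θ ^ 2 + β * p₂ / (2 * α) * D θ + β ^ 2 * p₂ ^ 2 / (4 * α)) :=
        sum_congr rfl fun θ _ => by rw [h₁]; field_simp; ring
    _ = _ := by
      rw [sum_mul_quadratic hP, inv_mul_eq_div, add_assoc, h₂]
      congr 1
      field_simp
      ring

lemma sum_mul_payoff₂_of_equilibrium (hP : ∑ θ, P θ = 1) (hα : α ≠ 0) (hαβ : 2 * α - β ≠ 0)
    (h₁ : ∀ θ, p₁ θ = (D θ + β * p₂) / (2 * α)) (h₂ : p₂ = (∑ θ, P θ * D θ) / (2 * α - β)) :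
    ∑ θ, P θ * ((D θ - α * p₂ + β * p₁ θ) * p₂) =
      α * (∑ θ, P θ * D θ) ^ 2 / (2 * α - β) ^ 2 := by
  rw [sum_mul_revenue hP, sum_mul_of_bestResponse₁ hP h₁, ((eq_div_iff hαβ).mp h₂).symm]
  field_simp
  ring

end Game

theorem stmt3_general {Θ : Type*} [Fintype Θ] (P D : Θ → ℝ)
    (hP : ∀ θ, 0 ≤ P θ) (hPsum : ∑ θ, P θ = 1) (hD : ∀ θ, 0 ≤ D θ)
    (α β : ℝ) (hβ : 0 < β) (hαβ : β < α)
    (p₁ : Θ → ℝ) (p₂ : ℝ) (hp₂ : 0 ≤ p₂) :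
    (((∀ θ, ∀ q, 0 ≤ q → (D θ - α * q + β * p₂) * q ≤
          (D θ - α * p₁ θ + β * p₂) * p₁ θ) ∧
      (∀ q, 0 ≤ q → ∑ θ, P θ * ((D θ - α * q + β * p₁ θ) * q) ≤
          ∑ θ, P θ * ((D θ - α * p₂ + β * p₁ θ) * p₂))) ↔
      ((∀ θ, p₁ θ = D θ / (2 * α) +
          β * (∑ θ', P θ' * D θ') / (2 * α * (2 * α - β))) ∧
        p₂ = (∑ θ', P θ' * D θ') / (2 * α - β))) ∧
    (((∀ θ, p₁ θ = D θ / (2 * α) +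
          β * (∑ θ', P θ' * D θ') / (2 * α * (2 * α - β))) ∧
        p₂ = (∑ θ', P θ' * D θ') / (2 * α - β)) →
      (∑ θ, P θ * ((D θ - α * p₁ θ + β * p₂) * p₁ θ) =
          (∑ θ, P θ * D θ ^ 2) / (4 * α) +
            β * (4 * α - β) * (∑ θ, P θ * D θ) ^ 2 /
              (4 * α * (2 * α - β) ^ 2)) ∧
      (∑ θ, P θ * ((D θ - α * p₂ + β * p₁ θ) * p₂) =
          α * (∑ θ, P θ * D θ) ^ 2 / (2 * α - β) ^ 2)) := by
  have hα : 0 < α := hβ.trans hαβ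
  have h2αβ : 2 * α - β ≠ 0 := by linarith
  have hsolved := bestResponse₁_and_eq_iff (D := D) (p₁ := p₁) (p₂ := p₂) hα.ne' h2αβ
    (∑ θ, P θ * D θ)
  refine ⟨?_, fun h => ?_⟩
  · rw [← hsolved, forall_payoff₁_le_iff hD hβ.le hα hp₂]
    exact and_congr_right fun h₁ => forall_expectedPayoff₂_le_iff hPsum hP hD hβ.le hαβ hp₂ h₁
  · obtain ⟨h₁, h₂⟩ := hsolved.mpr h
    exact ⟨sum_mul_payoff₁_of_equilibrium hPsum hα.ne' h2αβ h₁ h₂,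
      sum_mul_payoff₂_of_equilibrium hPsum hα.ne' h2αβ h₁ h₂⟩

/-- Asymmetric-information two-ISP linear demand game: ISP₁ observes θ and maximizes
(D(θ) - α·p₁(θ) + β·p₂)·p₁(θ) pointwise; ISP₂ chooses a constant p₂ maximizing
E[(D(θ) - α·p₂ + β·p₁(θ))·p₂]. The unique equilibrium is
p₁(θ) = D(θ)/(2α) + β·E[D]/(2α(2α-β)) and p₂ = E[D]/(2α-β), with equilibrium expected
utilities E[U₁] = E[D²]/(4α) + β(4α-β)E[D]²/(4α(2α-β)²) and E[U₂] = α·E[D]²/(2α-β)². -/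
theorem stmt3 {Θ : Type*} [Fintype Θ] (P D : Θ → ℝ)
    (hP : ∀ θ, 0 ≤ P θ) (hPsum : ∑ θ, P θ = 1) (hD : ∀ θ, 0 ≤ D θ)
    (α β : ℝ) (hβ : 0 < β) (hαβ : β < α)
    (p₁ : Θ → ℝ) (p₂ : ℝ) (hp₁ : ∀ θ, 0 ≤ p₁ θ) (hp₂ : 0 ≤ p₂) :
    (((∀ θ, ∀ q, 0 ≤ q → (D θ - α * q + β * p₂) * q ≤
          (D θ - α * p₁ θ + β * p₂) * p₁ θ) ∧
      (∀ q, 0 ≤ q → ∑ θ, P θ * ((D θ - α * q + β * p₁ θ) * q) ≤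
          ∑ θ, P θ * ((D θ - α * p₂ + β * p₁ θ) * p₂))) ↔
      ((∀ θ, p₁ θ = D θ / (2 * α) +
          β * (∑ θ', P θ' * D θ') / (2 * α * (2 * α - β))) ∧
        p₂ = (∑ θ', P θ' * D θ') / (2 * α - β))) ∧
    (((∀ θ, p₁ θ = D θ / (2 * α) +
          β * (∑ θ', P θ' * D θ') / (2 * α * (2 * α - β))) ∧
        p₂ = (∑ θ', P θ' * D θ') / (2 * α - β)) →
      (∑ θ, P θ * ((D θ - α * p₁ θ + β * p₂) * p₁ θ) =
          (∑ θ, P θ * D θ ^ 2) / (4 * α) +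
            β * (4 * α - β) * (∑ θ, P θ * D θ) ^ 2 /
              (4 * α * (2 * α - β) ^ 2)) ∧
      (∑ θ, P θ * ((D θ - α * p₂ + β * p₁ θ) * p₂) =
          α * (∑ θ, P θ * D θ) ^ 2 / (2 * α - β) ^ 2)) :=
  stmt3_general P D hP hPsum hD α β hβ hαβ p₁ p₂ hp₂
end

section
/- In the asymmetric-information two-ISP linear demand game, the colluding ISP_1 (which observes θ) obtains equilibrium expected utility at least as large as the non-colluding ISP_2; specifically E[U_1] - E[U_2] = Var(D(θ))/(4α) ≥ 0, with strict inequality if and only if Var(D(θ)) > 0. -/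
/-! Since `β(4α - β) = 4α² - (2α - β)²`, the `E[D]²` terms of the two utilities combine to
`-E[D]²/(4α)`, so the gap is `(E[D²] - E[D]²)/(4α)`. Its numerator, the variance of `D`, is
nonnegative by Jensen's inequality for the convex function `x ↦ x²`. -/

open Finset

lemma sq_sum_mul_le_sum_mul_sq {ι : Type*} (s : Finset ι) (w f : ι → ℝ)
    (hw : ∀ i ∈ s, 0 ≤ w i) (hw₁ : ∑ i ∈ s, w i = 1) :
    (∑ i ∈ s, w i * f i) ^ 2 ≤ ∑ i ∈ s, w i * f i ^ 2 :=
  even_two.convexOn_pow.map_sum_le hw hw₁ fun _ _ => Set.mem_univ _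

section Utilities

variable (α β m₁ m₂ : ℝ)

/-- Equilibrium expected utility of the informed ISP, in terms of the moments `m₁ = E[D]` and
`m₂ = E[D²]`. -/
noncomputable def informedUtility : ℝ :=
  m₂ / (4 * α) + β * (4 * α - β) * m₁ ^ 2 / (4 * α * (2 * α - β) ^ 2)

noncomputable def uninformedUtility : ℝ :=
  α * m₁ ^ 2 / (2 * α - β) ^ 2

variable {α β m₁ m₂}

lemma informedUtility_sub_uninformedUtility (hα : α ≠ 0) (hαβ : 2 * α - β ≠ 0) :
    informedUtility α β m₁ m₂ - uninformedUtility α β m₁ = (m₂ - m₁ ^ 2) / (4 * α) := by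
  unfold informedUtility uninformedUtility
  rw [div_add_div _ _ (by positivity) (by positivity), div_sub_div _ _ (by positivity) (by positivity),
    div_eq_div_iff (by positivity) (by positivity)]
  ring

lemma uninformedUtility_lt_informedUtility_iff (hα : 0 < α) (hαβ : 2 * α - β ≠ 0) :
    uninformedUtility α β m₁ < informedUtility α β m₁ m₂ ↔ 0 < m₂ - m₁ ^ 2 := by
  rw [← sub_pos, informedUtility_sub_uninformedUtility hα.ne' hαβ]
  exact div_pos_iff_of_pos_right (by positivity)

lemma uninformedUtility_le_informedUtility (hα : 0 < α) (hαβ : 2 * α - β ≠ 0)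
    (hm : m₁ ^ 2 ≤ m₂) : uninformedUtility α β m₁ ≤ informedUtility α β m₁ m₂ := by
  rw [← sub_nonneg, informedUtility_sub_uninformedUtility hα.ne' hαβ]
  exact div_nonneg (sub_nonneg.mpr hm) (by positivity)

end Utilities

theorem stmt4_general {Θ : Type*} [Fintype Θ] (P D : Θ → ℝ)
    (hP : ∀ θ, 0 ≤ P θ) (hPsum : ∑ θ, P θ = 1)
    (α β : ℝ) (hβ : 0 < β) (hαβ : β < α) :
    (((∑ θ, P θ * D θ ^ 2) / (4 * α) +
        β * (4 * α - β) * (∑ θ, P θ * D θ) ^ 2 / (4 * α * (2 * α - β) ^ 2)) -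
      α * (∑ θ, P θ * D θ) ^ 2 / (2 * α - β) ^ 2 =
        ((∑ θ, P θ * D θ ^ 2) - (∑ θ, P θ * D θ) ^ 2) / (4 * α)) ∧
    (α * (∑ θ, P θ * D θ) ^ 2 / (2 * α - β) ^ 2 ≤
      (∑ θ, P θ * D θ ^ 2) / (4 * α) +
        β * (4 * α - β) * (∑ θ, P θ * D θ) ^ 2 / (4 * α * (2 * α - β) ^ 2)) ∧
    (α * (∑ θ, P θ * D θ) ^ 2 / (2 * α - β) ^ 2 <
        (∑ θ, P θ * D θ ^ 2) / (4 * α) +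
          β * (4 * α - β) * (∑ θ, P θ * D θ) ^ 2 / (4 * α * (2 * α - β) ^ 2) ↔
      0 < (∑ θ, P θ * D θ ^ 2) - (∑ θ, P θ * D θ) ^ 2) := by
  have hα : 0 < α := hβ.trans hαβ
  have hαβ' : 2 * α - β ≠ 0 := by linarith
  have hvar : (∑ θ, P θ * D θ) ^ 2 ≤ ∑ θ, P θ * D θ ^ 2 :=
    sq_sum_mul_le_sum_mul_sq univ P D (fun θ _ => hP θ) hPsum
  exact ⟨informedUtility_sub_uninformedUtility hα.ne' hαβ',
    uninformedUtility_le_informedUtility hα hαβ' hvar,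
    uninformedUtility_lt_informedUtility_iff hα hαβ'⟩

/-- In the asymmetric-information game with equilibrium expected utilities
E[U₁] = E[D²]/(4α) + β(4α-β)E[D]²/(4α(2α-β)²) and E[U₂] = α·E[D]²/(2α-β)², the informed
ISP₁ earns at least as much as ISP₂: E[U₁] - E[U₂] = Var(D)/(4α) ≥ 0, strictly iff
Var(D) > 0. -/
theorem stmt4 {Θ : Type*} [Fintype Θ] (P D : Θ → ℝ)
    (hP : ∀ θ, 0 ≤ P θ) (hPsum : ∑ θ, P θ = 1) (hD : ∀ θ, 0 ≤ D θ)
    (α β : ℝ) (hβ : 0 < β) (hαβ : β < α) :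
    (((∑ θ, P θ * D θ ^ 2) / (4 * α) +
        β * (4 * α - β) * (∑ θ, P θ * D θ) ^ 2 / (4 * α * (2 * α - β) ^ 2)) -
      α * (∑ θ, P θ * D θ) ^ 2 / (2 * α - β) ^ 2 =
        ((∑ θ, P θ * D θ ^ 2) - (∑ θ, P θ * D θ) ^ 2) / (4 * α)) ∧
    (α * (∑ θ, P θ * D θ) ^ 2 / (2 * α - β) ^ 2 ≤
      (∑ θ, P θ * D θ ^ 2) / (4 * α) +
        β * (4 * α - β) * (∑ θ, P θ * D θ) ^ 2 / (4 * α * (2 * α - β) ^ 2)) ∧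
    (α * (∑ θ, P θ * D θ) ^ 2 / (2 * α - β) ^ 2 <
        (∑ θ, P θ * D θ ^ 2) / (4 * α) +
          β * (4 * α - β) * (∑ θ, P θ * D θ) ^ 2 / (4 * α * (2 * α - β) ^ 2) ↔
      0 < (∑ θ, P θ * D θ ^ 2) - (∑ θ, P θ * D θ) ^ 2) :=
  stmt4_general P D hP hPsum α β hβ hαβ
end

section
/- In the asymmetric-information two-ISP linear demand game, the equilibrium expected utility of the informed ISP_1 is weakly less than the per-ISP equilibrium expected utility in the full-information game: E[D(θ)²]/(4α) + β(4α - β)E[D(θ)]²/(4α(2α - β)²) ≤ α E[D(θ)²]/(2α - β)², with equality iff Var(D(θ)) = 0. Hence the colluding ISP's revenue further improves if the non-colluding ISP also receives signals. -/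
/-!
The gap between the two utilities is a positive multiple of the variance:
α/(2α - β)² - 1/(4α) = β(4α - β)/(4α(2α - β)²), so the gap equals
β(4α - β)/(4α(2α - β)²) · (E[D²] - E[D]²), and E[D]² ≤ E[D²] is Jensen's inequality for x ↦ x².
-/

lemma fullInfo_sub_asymInfo_eq {α β m₁ m₂ : ℝ} (hα : α ≠ 0) (hαβ : 2 * α - β ≠ 0) :
    α * m₂ / (2 * α - β) ^ 2 -
        (m₂ / (4 * α) + β * (4 * α - β) * m₁ ^ 2 / (4 * α * (2 * α - β) ^ 2)) =
      β * (4 * α - β) / (4 * α * (2 * α - β) ^ 2) * (m₂ - m₁ ^ 2) := by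
  rw [div_add_div _ _ (by positivity) (by positivity),
    div_sub_div _ _ (by positivity) (by positivity), div_mul_eq_mul_div,
    div_eq_div_iff (by positivity) (by positivity)]
  ring

theorem stmt5_general {Θ : Type*} [Fintype Θ] (P D : Θ → ℝ)
    (hP : ∀ θ, 0 ≤ P θ) (hPsum : ∑ θ, P θ = 1)
    (α β : ℝ) (hβ : 0 < β) (hαβ : β < α) :
    ((∑ θ, P θ * D θ ^ 2) / (4 * α) +
        β * (4 * α - β) * (∑ θ, P θ * D θ) ^ 2 / (4 * α * (2 * α - β) ^ 2) ≤
      α * (∑ θ, P θ * D θ ^ 2) / (2 * α - β) ^ 2) ∧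
    ((∑ θ, P θ * D θ ^ 2) / (4 * α) +
        β * (4 * α - β) * (∑ θ, P θ * D θ) ^ 2 / (4 * α * (2 * α - β) ^ 2) =
        α * (∑ θ, P θ * D θ ^ 2) / (2 * α - β) ^ 2 ↔
      (∑ θ, P θ * D θ ^ 2) - (∑ θ, P θ * D θ) ^ 2 = 0) := by
  have hα : 0 < α := hβ.trans hαβ
  have h2αβ : 0 < 2 * α - β := by linarith
  have hgap := fullInfo_sub_asymInfo_eq (m₁ := ∑ θ, P θ * D θ) (m₂ := ∑ θ, P θ * D θ ^ 2)
    hα.ne' h2αβ.ne'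
  have hc : 0 < β * (4 * α - β) / (4 * α * (2 * α - β) ^ 2) :=
    div_pos (mul_pos hβ (by linarith)) (by positivity)
  have hvar : 0 ≤ (∑ θ, P θ * D θ ^ 2) - (∑ θ, P θ * D θ) ^ 2 :=
    sub_nonneg.2 <| Real.pow_arith_mean_le_arith_mean_pow_of_even _ P D
      (fun θ _ => hP θ) hPsum even_two
  refine ⟨sub_nonneg.1 (hgap ▸ mul_nonneg hc.le hvar), ?_⟩
  rw [eq_comm, ← sub_eq_zero, hgap, mul_eq_zero, or_iff_right hc.ne']

/-- The informed ISP₁'s equilibrium expected utility under asymmetric information,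
E[D²]/(4α) + β(4α-β)E[D]²/(4α(2α-β)²), is at most the per-ISP full-information
equilibrium utility α·E[D²]/(2α-β)², with equality iff Var(D) = 0. -/
theorem stmt5 {Θ : Type*} [Fintype Θ] (P D : Θ → ℝ)
    (hP : ∀ θ, 0 ≤ P θ) (hPsum : ∑ θ, P θ = 1) (hD : ∀ θ, 0 ≤ D θ)
    (α β : ℝ) (hβ : 0 < β) (hαβ : β < α) :
    ((∑ θ, P θ * D θ ^ 2) / (4 * α) +
        β * (4 * α - β) * (∑ θ, P θ * D θ) ^ 2 / (4 * α * (2 * α - β) ^ 2) ≤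
      α * (∑ θ, P θ * D θ ^ 2) / (2 * α - β) ^ 2) ∧
    ((∑ θ, P θ * D θ ^ 2) / (4 * α) +
        β * (4 * α - β) * (∑ θ, P θ * D θ) ^ 2 / (4 * α * (2 * α - β) ^ 2) =
        α * (∑ θ, P θ * D θ ^ 2) / (2 * α - β) ^ 2 ↔
      (∑ θ, P θ * D θ ^ 2) - (∑ θ, P θ * D θ) ^ 2 = 0) :=
  stmt5_general P D hP hPsum α β hβ hαβ
end

section
/- In the two-ISP linear demand model, the equilibrium expected utility of the content provider, (2α E[D(θ)]/(2α - β)) · p_a, is the same in all three regimes: no information, full information, and asymmetric information. Equivalently, the total expected equilibrium demand d_1 + d_2 equals 2α E[D(θ)]/(2α - β) in each case. -/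
/-!
Total demand is `d₁ + d₂ = 2D - (α - β)(p₁ + p₂)`, so the expected total demand depends on the
prices only through the expected price sum `E[p₁ + p₂]`. In each of the three equilibria this
expected price sum is `2 E[D] / (2α - β)`, whence the expected total demand is
`2 E[D] - 2 (α - β) E[D] / (2α - β) = 2α E[D] / (2α - β)` in every regime.
-/

open Finset

section LinearDemand

variable {ι : Type*} [Fintype ι] (P D p₁ p₂ : ι → ℝ) {α β : ℝ}

lemma sum_mul_totalDemand :
    ∑ i, P i * ((D i - α * p₁ i + β * p₂ i) + (D i - α * p₂ i + β * p₁ i)) =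
      2 * ∑ i, P i * D i - (α - β) * ∑ i, P i * (p₁ i + p₂ i) := by
  rw [mul_sum, mul_sum, ← sum_sub_distrib]
  exact sum_congr rfl fun i _ => by ring

lemma sum_mul_totalDemand_of_sum_mul_priceSum (hk : 2 * α - β ≠ 0)
    (hp : ∑ i, P i * (p₁ i + p₂ i) = 2 * (∑ i, P i * D i) / (2 * α - β)) :
    ∑ i, P i * ((D i - α * p₁ i + β * p₂ i) + (D i - α * p₂ i + β * p₁ i)) =
      2 * α * (∑ i, P i * D i) / (2 * α - β) := by
  rw [sum_mul_totalDemand, hp]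
  field_simp
  ring

variable {P}

lemma sum_mul_affine_s6 (hP : ∑ i, P i = 1) (a c : ℝ) :
    ∑ i, P i * (a * D i + c) = a * ∑ i, P i * D i + c := by
  simp only [mul_add, sum_add_distrib, ← sum_mul, hP, one_mul, mul_sum]
  exact congrArg (· + c) (sum_congr rfl fun i _ => by ring)

lemma sum_mul_noInfoPriceSum (hP : ∑ i, P i = 1) :
    ∑ i, P i * ((∑ j, P j * D j) / (2 * α - β) + (∑ j, P j * D j) / (2 * α - β)) =
      2 * (∑ i, P i * D i) / (2 * α - β) := by
  rw [← sum_mul, hP]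
  ring

lemma sum_mul_fullInfoPriceSum :
    ∑ i, P i * (D i / (2 * α - β) + D i / (2 * α - β)) =
      2 * (∑ i, P i * D i) / (2 * α - β) := by
  rw [mul_sum, sum_div]
  exact sum_congr rfl fun i _ => by ring

lemma sum_mul_asymInfoPriceSum (hP : ∑ i, P i = 1) (hα : α ≠ 0) (hk : 2 * α - β ≠ 0) :
    ∑ i, P i * ((D i / (2 * α) + β * (∑ j, P j * D j) / (2 * α * (2 * α - β))) +
        (∑ j, P j * D j) / (2 * α - β)) =
      2 * (∑ i, P i * D i) / (2 * α - β) := by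
  set E := ∑ j, P j * D j
  have hprice : ∀ i, D i / (2 * α) + β * E / (2 * α * (2 * α - β)) + E / (2 * α - β) =
      1 / (2 * α) * D i + (2 * α + β) * E / (2 * α * (2 * α - β)) := fun i => by
    field_simp
    ring
  simp_rw [hprice]
  rw [sum_mul_affine_s6 D hP]
  field_simp
  ring

end LinearDemand

theorem stmt6_general {Θ : Type*} [Fintype Θ] (P D : Θ → ℝ)
    (hPsum : ∑ θ, P θ = 1)
    (α β pa : ℝ) (hβ : 0 < β) (hαβ : β < α) :
    -- no information: p₁ = p₂ = E[D]/(2α-β)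
    (∑ θ, P θ *
        ((D θ - α * ((∑ θ', P θ' * D θ') / (2 * α - β)) +
            β * ((∑ θ', P θ' * D θ') / (2 * α - β))) +
         (D θ - α * ((∑ θ', P θ' * D θ') / (2 * α - β)) +
            β * ((∑ θ', P θ' * D θ') / (2 * α - β)))) =
      2 * α * (∑ θ, P θ * D θ) / (2 * α - β)) ∧
    -- full information: p₁(θ) = p₂(θ) = D(θ)/(2α-β)
    (∑ θ, P θ *
        ((D θ - α * (D θ / (2 * α - β)) + β * (D θ / (2 * α - β))) +
         (D θ - α * (D θ / (2 * α - β)) + β * (D θ / (2 * α - β)))) =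
      2 * α * (∑ θ, P θ * D θ) / (2 * α - β)) ∧
    -- asymmetric information: p₁(θ) = D(θ)/(2α) + βE[D]/(2α(2α-β)), p₂ = E[D]/(2α-β)
    (∑ θ, P θ *
        ((D θ - α * (D θ / (2 * α) +
              β * (∑ θ', P θ' * D θ') / (2 * α * (2 * α - β))) +
            β * ((∑ θ', P θ' * D θ') / (2 * α - β))) +
         (D θ - α * ((∑ θ', P θ' * D θ') / (2 * α - β)) +
            β * (D θ / (2 * α) +
              β * (∑ θ', P θ' * D θ') / (2 * α * (2 * α - β))))) =
      2 * α * (∑ θ, P θ * D θ) / (2 * α - β)) ∧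
    -- hence all three CP equilibrium expected utilities coincide
    ((∑ θ, P θ *
        ((D θ - α * ((∑ θ', P θ' * D θ') / (2 * α - β)) +
            β * ((∑ θ', P θ' * D θ') / (2 * α - β))) +
         (D θ - α * ((∑ θ', P θ' * D θ') / (2 * α - β)) +
            β * ((∑ θ', P θ' * D θ') / (2 * α - β))))) * pa =
      (∑ θ, P θ *
        ((D θ - α * (D θ / (2 * α - β)) + β * (D θ / (2 * α - β))) +
         (D θ - α * (D θ / (2 * α - β)) + β * (D θ / (2 * α - β))))) * pa ∧
     (∑ θ, P θ *
        ((D θ - α * (D θ / (2 * α - β)) + β * (D θ / (2 * α - β))) +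
         (D θ - α * (D θ / (2 * α - β)) + β * (D θ / (2 * α - β))))) * pa =
      (∑ θ, P θ *
        ((D θ - α * (D θ / (2 * α) +
              β * (∑ θ', P θ' * D θ') / (2 * α * (2 * α - β))) +
            β * ((∑ θ', P θ' * D θ') / (2 * α - β))) +
         (D θ - α * ((∑ θ', P θ' * D θ') / (2 * α - β)) +
            β * (D θ / (2 * α) +
              β * (∑ θ', P θ' * D θ') / (2 * α * (2 * α - β)))))) * pa) := by
  have hα : α ≠ 0 := (hβ.trans hαβ).ne'
  have hk : 2 * α - β ≠ 0 := by linarith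
  have h_no := sum_mul_totalDemand_of_sum_mul_priceSum P D _ _ hk
    (sum_mul_noInfoPriceSum D hPsum)
  have h_full := sum_mul_totalDemand_of_sum_mul_priceSum P D _ _ hk
    (sum_mul_fullInfoPriceSum D)
  have h_asym := sum_mul_totalDemand_of_sum_mul_priceSum P D _ _ hk
    (sum_mul_asymInfoPriceSum D hPsum hα hk)
  exact ⟨h_no, h_full, h_asym, by rw [h_no, h_full], by rw [h_full, h_asym]⟩

/-- The CP's equilibrium expected utility (2α·E[D]/(2α-β))·p_a is the same in all three
regimes (no information, full information, asymmetric information): the total expected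
equilibrium demand equals 2α·E[D]/(2α-β) in each case. -/
theorem stmt6 {Θ : Type*} [Fintype Θ] (P D : Θ → ℝ)
    (hP : ∀ θ, 0 ≤ P θ) (hPsum : ∑ θ, P θ = 1) (hD : ∀ θ, 0 ≤ D θ)
    (α β pa : ℝ) (hβ : 0 < β) (hαβ : β < α) (hpa : 0 ≤ pa) :
    -- no information: p₁ = p₂ = E[D]/(2α-β)
    (∑ θ, P θ *
        ((D θ - α * ((∑ θ', P θ' * D θ') / (2 * α - β)) +
            β * ((∑ θ', P θ' * D θ') / (2 * α - β))) +
         (D θ - α * ((∑ θ', P θ' * D θ') / (2 * α - β)) +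
            β * ((∑ θ', P θ' * D θ') / (2 * α - β)))) =
      2 * α * (∑ θ, P θ * D θ) / (2 * α - β)) ∧
    -- full information: p₁(θ) = p₂(θ) = D(θ)/(2α-β)
    (∑ θ, P θ *
        ((D θ - α * (D θ / (2 * α - β)) + β * (D θ / (2 * α - β))) +
         (D θ - α * (D θ / (2 * α - β)) + β * (D θ / (2 * α - β)))) =
      2 * α * (∑ θ, P θ * D θ) / (2 * α - β)) ∧
    -- asymmetric information: p₁(θ) = D(θ)/(2α) + βE[D]/(2α(2α-β)), p₂ = E[D]/(2α-β)
    (∑ θ, P θ *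
        ((D θ - α * (D θ / (2 * α) +
              β * (∑ θ', P θ' * D θ') / (2 * α * (2 * α - β))) +
            β * ((∑ θ', P θ' * D θ') / (2 * α - β))) +
         (D θ - α * ((∑ θ', P θ' * D θ') / (2 * α - β)) +
            β * (D θ / (2 * α) +
              β * (∑ θ', P θ' * D θ') / (2 * α * (2 * α - β))))) =
      2 * α * (∑ θ, P θ * D θ) / (2 * α - β)) ∧
    -- hence all three CP equilibrium expected utilities coincide
    ((∑ θ, P θ *
        ((D θ - α * ((∑ θ', P θ' * D θ') / (2 * α - β)) +
            β * ((∑ θ', P θ' * D θ') / (2 * α - β))) +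
         (D θ - α * ((∑ θ', P θ' * D θ') / (2 * α - β)) +
            β * ((∑ θ', P θ' * D θ') / (2 * α - β))))) * pa =
      (∑ θ, P θ *
        ((D θ - α * (D θ / (2 * α - β)) + β * (D θ / (2 * α - β))) +
         (D θ - α * (D θ / (2 * α - β)) + β * (D θ / (2 * α - β))))) * pa ∧
     (∑ θ, P θ *
        ((D θ - α * (D θ / (2 * α - β)) + β * (D θ / (2 * α - β))) +
         (D θ - α * (D θ / (2 * α - β)) + β * (D θ / (2 * α - β))))) * pa =
      (∑ θ, P θ *
        ((D θ - α * (D θ / (2 * α) +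
              β * (∑ θ', P θ' * D θ') / (2 * α * (2 * α - β))) +
            β * ((∑ θ', P θ' * D θ') / (2 * α - β))) +
         (D θ - α * ((∑ θ', P θ' * D θ') / (2 * α - β)) +
            β * (D θ / (2 * α) +
              β * (∑ θ', P θ' * D θ') / (2 * α * (2 * α - β)))))) * pa) :=
  stmt6_general P D hPsum α β pa hβ hαβ
end

section
/- In the two-ISP game with side payment p_d ≥ 0 (ISP_1 pays p_d per unit demand to the CP for the signal), the unique equilibrium prices are p_1(θ) = D(θ)/(2α) + β E[D(θ)]/(2α(2α - β)) + 2α² p_d/(4α² - β²) and p_2 = E[D(θ)]/(2α - β) + αβ p_d/(4α² - β²). -/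
/-!
Each ISP's payoff is a concave quadratic in its own price whose vertex is nonnegative, so a price
is a best response over `q ≥ 0` exactly when it is the vertex. Equilibrium is therefore the linear
system `2α p₁(θ) = D(θ) + β p₂ + α p_d`, `2α p₂ = E[D] + β E[p₁]`; taking expectations in the first
equation leaves a 2 × 2 system in `p₂` and `E[p₁]` with determinant `4α² - β² ≠ 0`.
-/

open Finset

theorem quadratic_sub_eq_mul_sq_of_vertex {R : Type*} [CommRing R] {a c d x q : R}
    (h : 2 * a * x = c + a * d) :
    (c - a * x) * (x - d) - (c - a * q) * (q - d) = a * (x - q) ^ 2 := by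
  linear_combination (q - x) * h

section OrderedField

variable {K : Type*} [Field K] [LinearOrder K] [IsStrictOrderedRing K]

theorem forall_nonneg_quadratic_le_iff {a c d x : K} (ha : 0 < a) (hc : 0 ≤ c + a * d) :
    (∀ q, 0 ≤ q → (c - a * q) * (q - d) ≤ (c - a * x) * (x - d)) ↔ 2 * a * x = c + a * d := by
  constructor
  · intro hmax
    have hk : 2 * a * ((c + a * d) / (2 * a)) = c + a * d := mul_div_cancel₀ _ (by positivity)
    have hle := hmax _ (by positivity : 0 ≤ (c + a * d) / (2 * a))
    have hsq : (x - (c + a * d) / (2 * a)) ^ 2 = 0 :=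
      le_antisymm (by nlinarith [quadratic_sub_eq_mul_sq_of_vertex (q := x) hk]) (sq_nonneg _)
    rw [sub_eq_zero.mp (pow_eq_zero_iff two_ne_zero |>.mp hsq), hk]
  · intro h q _
    nlinarith [quadratic_sub_eq_mul_sq_of_vertex (q := q) h, sq_nonneg (x - q)]

end OrderedField

section WeightedSum

variable {Θ : Type*} [Fintype Θ]

section CommRing

variable {R : Type*} [CommRing R] {P : Θ → R}

theorem weighted_sum_const (hP : ∑ θ, P θ = 1) (a : R) : ∑ θ, P θ * a = a := by
  rw [← sum_mul, hP, one_mul]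

theorem weighted_sum_sub_add (hP : ∑ θ, P θ = 1) (f g : Θ → R) (a b : R) :
    ∑ θ, P θ * (f θ - a + b * g θ) = ∑ θ, P θ * f θ + b * ∑ θ, P θ * g θ - a := by
  simp only [mul_add, mul_sub, sum_add_distrib, sum_sub_distrib, weighted_sum_const hP,
    mul_left_comm _ b, ← mul_sum]
  ring

theorem weighted_sum_of_forall_mul_eq (hP : ∑ θ, P θ = 1) {f g : Θ → R} {a c : R}
    (h : ∀ θ, a * f θ = g θ + c) : a * ∑ θ, P θ * f θ = ∑ θ, P θ * g θ + c := by
  calc a * ∑ θ, P θ * f θ = ∑ θ, P θ * (g θ + c) := by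
        simp only [mul_sum, ← h, mul_left_comm]
    _ = ∑ θ, P θ * g θ + c := by
        simp only [mul_add, sum_add_distrib, weighted_sum_const hP]

end CommRing

theorem best_response_system_iff {K : Type*} [Field K] [CharZero K] {P : Θ → K}
    (hP : ∑ θ, P θ = 1) {D p₁ : Θ → K} {α β pd p₂ : K}
    (hα : α ≠ 0) (hminus : 2 * α - β ≠ 0) (hplus : 2 * α + β ≠ 0) :
    ((∀ θ, 2 * α * p₁ θ = D θ + β * p₂ + α * pd) ∧
        2 * α * p₂ = ∑ θ, P θ * D θ + β * ∑ θ, P θ * p₁ θ) ↔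
      ((∀ θ, p₁ θ = D θ / (2 * α) + β * (∑ θ', P θ' * D θ') / (2 * α * (2 * α - β)) +
          2 * α ^ 2 * pd / (4 * α ^ 2 - β ^ 2)) ∧
        p₂ = (∑ θ', P θ' * D θ') / (2 * α - β) + α * β * pd / (4 * α ^ 2 - β ^ 2)) := by
  set E := ∑ θ, P θ * D θ
  have hdiff : 4 * α ^ 2 - β ^ 2 = (2 * α - β) * (2 * α + β) := by ring
  have hmean (h : ∀ θ, 2 * α * p₁ θ = D θ + β * p₂ + α * pd) :
      2 * α * ∑ θ, P θ * p₁ θ = E + (β * p₂ + α * pd) :=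
    weighted_sum_of_forall_mul_eq hP fun θ => (h θ).trans (add_assoc _ _ _)
  have hp₂_iff : p₂ = E / (2 * α - β) + α * β * pd / (4 * α ^ 2 - β ^ 2) ↔
      (4 * α ^ 2 - β ^ 2) * p₂ = (2 * α + β) * E + α * β * pd := by
    rw [hdiff]
    field_simp
  constructor
  · rintro ⟨h₁, h₂⟩
    have hp₂ := hp₂_iff.mpr (by linear_combination 2 * α * h₂ + β * hmean h₁)
    refine ⟨fun θ => ?_, hp₂⟩
    apply mul_left_cancel₀ (mul_ne_zero two_ne_zero hα)
    rw [h₁ θ, hp₂, hdiff]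
    field_simp
    ring
  · rintro ⟨h₁, h₂⟩
    have hbr₁ : ∀ θ, 2 * α * p₁ θ = D θ + β * p₂ + α * pd := by
      intro θ
      rw [h₁ θ, h₂, hdiff]
      field_simp
      ring
    refine ⟨hbr₁, mul_left_cancel₀ (mul_ne_zero two_ne_zero hα) ?_⟩
    linear_combination hp₂_iff.mp h₂ - β * hmean hbr₁

end WeightedSum

/-- Two-ISP game with side payment p_d ≥ 0: ISP₁ observes θ and maximizes
(D(θ) - α·p₁(θ) + β·p₂)(p₁(θ) - p_d) pointwise; ISP₂ maximizes
E[(D(θ) - α·p₂ + β·p₁(θ))]·p₂. The unique equilibrium prices are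
p₁(θ) = D(θ)/(2α) + βE[D]/(2α(2α-β)) + 2α²p_d/(4α²-β²) and
p₂ = E[D]/(2α-β) + αβp_d/(4α²-β²). -/
theorem stmt7 {Θ : Type*} [Fintype Θ] (P D : Θ → ℝ)
    (hP : ∀ θ, 0 ≤ P θ) (hPsum : ∑ θ, P θ = 1) (hD : ∀ θ, 0 ≤ D θ)
    (α β pd : ℝ) (hβ : 0 < β) (hαβ : β < α) (hpd : 0 ≤ pd)
    (p₁ : Θ → ℝ) (p₂ : ℝ) (hp₁ : ∀ θ, 0 ≤ p₁ θ) (hp₂ : 0 ≤ p₂) :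
    ((∀ θ, ∀ q, 0 ≤ q → (D θ - α * q + β * p₂) * (q - pd) ≤
        (D θ - α * p₁ θ + β * p₂) * (p₁ θ - pd)) ∧
     (∀ q, 0 ≤ q → (∑ θ, P θ * (D θ - α * q + β * p₁ θ)) * q ≤
        (∑ θ, P θ * (D θ - α * p₂ + β * p₁ θ)) * p₂)) ↔
    ((∀ θ, p₁ θ = D θ / (2 * α) +
        β * (∑ θ', P θ' * D θ') / (2 * α * (2 * α - β)) +
        2 * α ^ 2 * pd / (4 * α ^ 2 - β ^ 2)) ∧
      p₂ = (∑ θ', P θ' * D θ') / (2 * α - β) +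
        α * β * pd / (4 * α ^ 2 - β ^ 2)) := by
  have hα : 0 < α := hβ.trans hαβ
  have hE : 0 ≤ ∑ θ, P θ * D θ := sum_nonneg fun θ _ => mul_nonneg (hP θ) (hD θ)
  have hT : 0 ≤ ∑ θ, P θ * p₁ θ := sum_nonneg fun θ _ => mul_nonneg (hP θ) (hp₁ θ)
  rw [← best_response_system_iff hPsum hα.ne' (by linarith) (by linarith)]
  refine and_congr (forall_congr' fun θ => ?_) ?_
  · have hc : 0 ≤ D θ + β * p₂ + α * pd :=
      add_nonneg (add_nonneg (hD θ) (mul_nonneg hβ.le hp₂)) (mul_nonneg hα.le hpd)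
    simpa only [sub_add_eq_add_sub] using forall_nonneg_quadratic_le_iff (x := p₁ θ) hα hc
  · have hc : 0 ≤ ∑ θ, P θ * D θ + β * ∑ θ, P θ * p₁ θ + α * 0 := by
      rw [mul_zero, add_zero]
      exact add_nonneg hE (mul_nonneg hβ.le hT)
    simp only [weighted_sum_sub_add hPsum]
    simpa only [sub_zero, mul_zero, add_zero] using forall_nonneg_quadratic_le_iff (x := p₂) hα hc
end

section
/- In the two-ISP game with side payment p_d, the equilibrium expected utilities are E[U_1] = α E[(D(θ)/(2α) + β E[D(θ)]/(2α(2α-β)) - p_d(2α² - β²)/(4α² - β²))²] and E[U_2] = α (E[D(θ)]/(2α - β) + αβ p_d/(4α² - β²))². -/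
/-!
The equilibrium prices are the solution of the first-order conditions
`∂U₁/∂p₁ = D - 2αp₁ + βp₂ + αp_d = 0` (pointwise in θ) and
`∂E[U₂]/∂p₂ = E[D] - 2αp₂ + βE[p₁] = 0`. The first makes ISP 1's demand equal to
`α (p₁ - p_d)`, so `U₁ = α (p₁ - p_d)²`; by linearity of expectation the second makes
ISP 2's expected demand equal to `α p₂`, so `E[U₂] = α p₂²`. What remains is to
write `p₁ - p_d` in closed form.
-/

open Finset

namespace SidePaymentGame

variable {α β pd d m p₁ p₂ : ℝ}

theorem firstOrder₁ (hα : α ≠ 0) (hX : 4 * α ^ 2 - β ^ 2 ≠ 0)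
    (hp₁ : p₁ = d / (2 * α) + β * m / (2 * α * (2 * α - β)) +
      2 * α ^ 2 * pd / (4 * α ^ 2 - β ^ 2))
    (hp₂ : p₂ = m / (2 * α - β) + α * β * pd / (4 * α ^ 2 - β ^ 2)) :
    d - 2 * α * p₁ + β * p₂ + α * pd = 0 := by
  have hX' : α ^ 2 * 4 - β ^ 2 ≠ 0 := by rwa [mul_comm]
  subst hp₁ hp₂
  field_simp
  ring

theorem firstOrder₂ (hα : α ≠ 0) (hαβ : 2 * α - β ≠ 0)
    (hp₁ : p₁ = m / (2 * α) + β * m / (2 * α * (2 * α - β)) +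
      2 * α ^ 2 * pd / (4 * α ^ 2 - β ^ 2))
    (hp₂ : p₂ = m / (2 * α - β) + α * β * pd / (4 * α ^ 2 - β ^ 2)) :
    m - 2 * α * p₂ + β * p₁ = 0 := by
  subst hp₁ hp₂
  field_simp
  ring

theorem margin₁_eq (hX : 4 * α ^ 2 - β ^ 2 ≠ 0)
    (hp₁ : p₁ = d / (2 * α) + β * m / (2 * α * (2 * α - β)) +
      2 * α ^ 2 * pd / (4 * α ^ 2 - β ^ 2)) :
    p₁ - pd = d / (2 * α) + β * m / (2 * α * (2 * α - β)) -
      pd * (2 * α ^ 2 - β ^ 2) / (4 * α ^ 2 - β ^ 2) := by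
  have hX' : α ^ 2 * 4 - β ^ 2 ≠ 0 := by rwa [mul_comm]
  have hpd : 2 * α ^ 2 * pd / (4 * α ^ 2 - β ^ 2) - pd =
      -(pd * (2 * α ^ 2 - β ^ 2) / (4 * α ^ 2 - β ^ 2)) := by
    field_simp
    ring
  linear_combination hp₁ + hpd

end SidePaymentGame

theorem Finset.sum_mul_div_add_of_sum_eq_one {Θ : Type*} [Fintype Θ] {P : Θ → ℝ}
    (hP : ∑ θ, P θ = 1) (f : Θ → ℝ) (a c : ℝ) :
    ∑ θ, P θ * (f θ / a + c) = (∑ θ, P θ * f θ) / a + c := by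
  simp only [mul_add, sum_add_distrib, ← sum_mul, hP, one_mul, sum_div, mul_div_assoc]

open SidePaymentGame

theorem stmt8_general {Θ : Type*} [Fintype Θ] (P D : Θ → ℝ)
    (hPsum : ∑ θ, P θ = 1)
    (α β pd : ℝ) (hβ : 0 < β) (hαβ : β < α)
    (p₁ : Θ → ℝ) (p₂ : ℝ)
    (hp₁ : ∀ θ, p₁ θ = D θ / (2 * α) +
        β * (∑ θ', P θ' * D θ') / (2 * α * (2 * α - β)) +
        2 * α ^ 2 * pd / (4 * α ^ 2 - β ^ 2))
    (hp₂ : p₂ = (∑ θ', P θ' * D θ') / (2 * α - β) +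
        α * β * pd / (4 * α ^ 2 - β ^ 2)) :
    (∑ θ, P θ * ((D θ - α * p₁ θ + β * p₂) * (p₁ θ - pd)) =
      α * ∑ θ, P θ *
        (D θ / (2 * α) + β * (∑ θ', P θ' * D θ') / (2 * α * (2 * α - β)) -
          pd * (2 * α ^ 2 - β ^ 2) / (4 * α ^ 2 - β ^ 2)) ^ 2) ∧
    (∑ θ, P θ * ((D θ - α * p₂ + β * p₁ θ) * p₂) =
      α * ((∑ θ', P θ' * D θ') / (2 * α - β) +
        α * β * pd / (4 * α ^ 2 - β ^ 2)) ^ 2) := by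
  have hα : α ≠ 0 := (hβ.trans hαβ).ne'
  have hαβ' : 2 * α - β ≠ 0 := by linarith
  have hX : 4 * α ^ 2 - β ^ 2 ≠ 0 := by nlinarith
  set M := ∑ θ', P θ' * D θ'
  constructor
  · rw [mul_sum]
    refine sum_congr rfl fun θ _ => ?_
    rw [← margin₁_eq hX (hp₁ θ)]
    linear_combination P θ * (p₁ θ - pd) * firstOrder₁ hα hX (hp₁ θ) hp₂
  · have hEp₁ : ∑ θ, P θ * p₁ θ = M / (2 * α) + β * M / (2 * α * (2 * α - β)) +
        2 * α ^ 2 * pd / (4 * α ^ 2 - β ^ 2) := by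
      simp only [hp₁, add_assoc]
      exact sum_mul_div_add_of_sum_eq_one hPsum D _ _
    have hEU₂ : ∑ θ, P θ * ((D θ - α * p₂ + β * p₁ θ) * p₂) =
        (M - α * p₂ + β * ∑ θ, P θ * p₁ θ) * p₂ := by
      have hpointwise : ∀ θ, P θ * ((D θ - α * p₂ + β * p₁ θ) * p₂) =
          P θ * D θ * p₂ - α * p₂ * p₂ * P θ + β * (P θ * p₁ θ) * p₂ := fun θ => by ring
      simp only [hpointwise, sum_add_distrib, sum_sub_distrib, ← sum_mul, ← mul_sum, hPsum]
      ring
    rw [hEU₂, ← hp₂]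
    linear_combination p₂ * firstOrder₂ hα hαβ' hEp₁ hp₂

/-- In the side-payment game at the equilibrium prices
p₁(θ) = D(θ)/(2α) + βE[D]/(2α(2α-β)) + 2α²p_d/(4α²-β²),
p₂ = E[D]/(2α-β) + αβp_d/(4α²-β²), the equilibrium expected utilities are
E[U₁] = α·E[(D(θ)/(2α) + βE[D]/(2α(2α-β)) - p_d(2α²-β²)/(4α²-β²))²] and
E[U₂] = α·(E[D]/(2α-β) + αβp_d/(4α²-β²))². -/
theorem stmt8 {Θ : Type*} [Fintype Θ] (P D : Θ → ℝ)
    (hP : ∀ θ, 0 ≤ P θ) (hPsum : ∑ θ, P θ = 1) (hD : ∀ θ, 0 ≤ D θ)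
    (α β pd : ℝ) (hβ : 0 < β) (hαβ : β < α) (hpd : 0 ≤ pd)
    (p₁ : Θ → ℝ) (p₂ : ℝ)
    (hp₁ : ∀ θ, p₁ θ = D θ / (2 * α) +
        β * (∑ θ', P θ' * D θ') / (2 * α * (2 * α - β)) +
        2 * α ^ 2 * pd / (4 * α ^ 2 - β ^ 2))
    (hp₂ : p₂ = (∑ θ', P θ' * D θ') / (2 * α - β) +
        α * β * pd / (4 * α ^ 2 - β ^ 2)) :
    (∑ θ, P θ * ((D θ - α * p₁ θ + β * p₂) * (p₁ θ - pd)) =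
      α * ∑ θ, P θ *
        (D θ / (2 * α) + β * (∑ θ', P θ' * D θ') / (2 * α * (2 * α - β)) -
          pd * (2 * α ^ 2 - β ^ 2) / (4 * α ^ 2 - β ^ 2)) ^ 2) ∧
    (∑ θ, P θ * ((D θ - α * p₂ + β * p₁ θ) * p₂) =
      α * ((∑ θ', P θ' * D θ') / (2 * α - β) +
        α * β * pd / (4 * α ^ 2 - β ^ 2)) ^ 2) :=
  stmt8_general P D hPsum α β pd hβ hαβ p₁ p₂ hp₁ hp₂
end

section
/- In the two-ISP game with side payment, for any p_d > 0 (such that ISP_1's equilibrium margins remain positive), the equilibrium expected utility of the informed ISP_1 is strictly smaller than when p_d = 0, while the equilibrium expected utility of the non-colluding ISP_2 is strictly larger than when p_d = 0. That is, charging the colluding ISP for the signal hurts it and helps its competitor. -/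
/-- In the side-payment game, for any p_d > 0 keeping ISP₁'s equilibrium margins
nonnegative, the informed ISP₁'s equilibrium expected utility
α·E[(X(θ) - c·p_d)²] (X(θ) = D(θ)/(2α) + βE[D]/(2α(2α-β)), c = (2α²-β²)/(4α²-β²))
is strictly smaller than at p_d = 0, while ISP₂'s equilibrium expected utility
α·(E[D]/(2α-β) + αβp_d/(4α²-β²))² is strictly larger than at p_d = 0. -/
theorem stmt9 {Θ : Type*} [Fintype Θ] (P D : Θ → ℝ)
    (hP : ∀ θ, 0 ≤ P θ) (hPsum : ∑ θ, P θ = 1) (hD : ∀ θ, 0 ≤ D θ)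
    (α β pd : ℝ) (hβ : 0 < β) (hαβ : β < α) (hpd : 0 < pd)
    (hED : 0 < ∑ θ, P θ * D θ)
    (hmargin : ∀ θ,
      0 ≤ (D θ / (2 * α) + β * (∑ θ', P θ' * D θ') / (2 * α * (2 * α - β))) -
        (2 * α ^ 2 - β ^ 2) / (4 * α ^ 2 - β ^ 2) * pd) :
    (α * ∑ θ, P θ *
        ((D θ / (2 * α) + β * (∑ θ', P θ' * D θ') / (2 * α * (2 * α - β))) -
          (2 * α ^ 2 - β ^ 2) / (4 * α ^ 2 - β ^ 2) * pd) ^ 2 <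
      α * ∑ θ, P θ *
        (D θ / (2 * α) + β * (∑ θ', P θ' * D θ') / (2 * α * (2 * α - β))) ^ 2) ∧
    (α * ((∑ θ, P θ * D θ) / (2 * α - β)) ^ 2 <
      α * ((∑ θ, P θ * D θ) / (2 * α - β) +
        α * β * pd / (4 * α ^ 2 - β ^ 2)) ^ 2) := by
  have hα : 0 < α := hβ.trans hαβ
  have hc : 0 < (2 * α ^ 2 - β ^ 2) / (4 * α ^ 2 - β ^ 2) := by
    apply div_pos <;> nlinarith
  have hcpd : 0 < (2 * α ^ 2 - β ^ 2) / (4 * α ^ 2 - β ^ 2) * pd := mul_pos hc hpd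
  constructor
  · apply mul_lt_mul_of_pos_left _ hα
    obtain ⟨θ₀, hθ₀⟩ : ∃ θ, 0 < P θ := by
      by_contra h
      push_neg at h
      have : ∑ θ, P θ = 0 := Finset.sum_eq_zero fun θ _ => le_antisymm (h θ) (hP θ)
      linarith [hPsum]
    have key : ∀ θ, 0 < P θ →
        P θ * ((D θ / (2 * α) + β * (∑ θ', P θ' * D θ') / (2 * α * (2 * α - β))) -
          (2 * α ^ 2 - β ^ 2) / (4 * α ^ 2 - β ^ 2) * pd) ^ 2 <
        P θ * (D θ / (2 * α) + β * (∑ θ', P θ' * D θ') / (2 * α * (2 * α - β))) ^ 2 := by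
      intro θ hPθ
      have h1 := hmargin θ
      set X := D θ / (2 * α) + β * (∑ θ', P θ' * D θ') / (2 * α * (2 * α - β)) with hX
      set t := (2 * α ^ 2 - β ^ 2) / (4 * α ^ 2 - β ^ 2) * pd with ht
      nlinarith [mul_pos (mul_pos hPθ hcpd) hcpd, mul_nonneg (mul_nonneg hPθ.le h1) hcpd.le]
    apply Finset.sum_lt_sum
    · intro θ _
      rcases (hP θ).lt_or_eq with h | h
      · exact (key θ h).le
      · rw [← h]; simp
    · exact ⟨θ₀, Finset.mem_univ θ₀, key θ₀ hθ₀⟩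
  · apply mul_lt_mul_of_pos_left _ hα
    have h1 : 0 < (∑ θ, P θ * D θ) / (2 * α - β) := by
      apply div_pos hED; linarith
    have h2 : 0 < α * β * pd / (4 * α ^ 2 - β ^ 2) := by
      apply div_pos (by positivity); nlinarith
    nlinarith
end

section
/- Assume Var(D(θ)) ≤ E[D(θ)]² · 4α²/(2α - β)² (so the square root below is real). Then ISP_1's equilibrium expected utility with side payment p_d is at least its no-collusion equilibrium utility α E[D(θ)]²/(2α - β)² if and only if p_d ≤ ((2α + β) E[D(θ)]/(2α² - β²)) · (1 - √(1 - (2α - β)² Var(D(θ))/(4α² E[D(θ)]²))), restricting to p_d not exceeding the larger root where ISP_1's margin stays nonnegative. -/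
open Finset

/-!
Writing `M = E[D]/(2α-β)` and `c = p_d(2α²-β²)/(4α²-β²)`, the bias-variance decomposition
turns ISP₁'s collusive utility into `α (Var D/(4α²) + (M - c)²)`, while the benchmark is `α M²`.
So collusion pays iff `(M - c)² ≥ M² r` with `r = 1 - (2α-β)² Var D/(4α² E[D]²)`, i.e. iff `c`
lies outside the open interval between the roots `M(1 ± √r)`; below the larger root this means
`c ≤ M(1 - √r)`. Rescaling by `(2α²-β²)/(4α²-β²)` gives the threshold on `p_d`.
-/

theorem sum_mul_mul_add_sq {ι : Type*} (s : Finset ι) (P X : ι → ℝ) (hP : ∑ i ∈ s, P i = 1)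
    (t b : ℝ) :
    ∑ i ∈ s, P i * (t * X i + b) ^ 2 =
      t ^ 2 * (∑ i ∈ s, P i * X i ^ 2 - (∑ i ∈ s, P i * X i) ^ 2) +
        (t * ∑ i ∈ s, P i * X i + b) ^ 2 :=
  calc ∑ i ∈ s, P i * (t * X i + b) ^ 2
      = t ^ 2 * ∑ i ∈ s, P i * X i ^ 2 + 2 * t * b * ∑ i ∈ s, P i * X i
          + b ^ 2 * ∑ i ∈ s, P i := by
        simp only [mul_sum, ← sum_add_distrib]
        exact sum_congr rfl fun i _ => by ring
    _ = _ := by rw [hP]; ring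

theorem mul_le_sub_sq_iff_le_mul_one_sub_sqrt {m r c : ℝ} (hc : c < m * (1 + √r)) :
    m ^ 2 * r ≤ (m - c) ^ 2 ↔ c ≤ m * (1 - √r) := by
  rcases le_or_gt 0 r with hr | hr
  · have hfactor : (m - c) ^ 2 - m ^ 2 * r = (m * (1 - √r) - c) * (m * (1 + √r) - c) := by
      linear_combination m ^ 2 * Real.sq_sqrt hr
    rw [← sub_nonneg, hfactor, mul_nonneg_iff_of_pos_right (sub_pos.mpr hc), sub_nonneg]
  · rw [Real.sqrt_eq_zero'.mpr hr.le] at hc ⊢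
    exact iff_of_true (by nlinarith [sq_nonneg (m - c)]) (by linarith)

theorem sum_mul_margin_sq {ι : Type*} (s : Finset ι) (P D : ι → ℝ) (hP : ∑ i ∈ s, P i = 1)
    {α β : ℝ} (hα : α ≠ 0) (hαβ : 2 * α - β ≠ 0) (c : ℝ) :
    ∑ i ∈ s, P i * ((D i / (2 * α) + β * (∑ j ∈ s, P j * D j) / (2 * α * (2 * α - β))) - c) ^ 2 =
      (∑ i ∈ s, P i * D i ^ 2 - (∑ i ∈ s, P i * D i) ^ 2) / (4 * α ^ 2) +
        ((∑ i ∈ s, P i * D i) / (2 * α - β) - c) ^ 2 := by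
  set E := ∑ i ∈ s, P i * D i
  have hmean : (2 * α)⁻¹ * E + (β * E / (2 * α * (2 * α - β)) - c) = E / (2 * α - β) - c := by
    field_simp
    ring
  calc ∑ i ∈ s, P i * ((D i / (2 * α) + β * E / (2 * α * (2 * α - β))) - c) ^ 2
      = ∑ i ∈ s, P i * ((2 * α)⁻¹ * D i + (β * E / (2 * α * (2 * α - β)) - c)) ^ 2 :=
        sum_congr rfl fun i _ => by ring
    _ = (2 * α)⁻¹ ^ 2 * (∑ i ∈ s, P i * D i ^ 2 - E ^ 2) +
          ((2 * α)⁻¹ * E + (β * E / (2 * α * (2 * α - β)) - c)) ^ 2 :=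
        sum_mul_mul_add_sq s P D hP _ _
    _ = _ := by rw [hmean]; ring

theorem stmt10_general {Θ : Type*} [Fintype Θ] (P D : Θ → ℝ)
    (hPsum : ∑ θ, P θ = 1)
    (α β : ℝ) (hβ : 0 < β) (hαβ : β < α)
    (hED : 0 < ∑ θ, P θ * D θ) :
    ∀ pd : ℝ, 0 ≤ pd →
      pd < ((2 * α + β) * (∑ θ, P θ * D θ) / (2 * α ^ 2 - β ^ 2)) *
          (1 + Real.sqrt (1 -
            (2 * α - β) ^ 2 * ((∑ θ, P θ * D θ ^ 2) - (∑ θ, P θ * D θ) ^ 2) /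
              (4 * α ^ 2 * (∑ θ, P θ * D θ) ^ 2))) →
      (α * (∑ θ, P θ * D θ) ^ 2 / (2 * α - β) ^ 2 ≤
          α * ∑ θ, P θ *
            ((D θ / (2 * α) +
                β * (∑ θ', P θ' * D θ') / (2 * α * (2 * α - β))) -
              pd * (2 * α ^ 2 - β ^ 2) / (4 * α ^ 2 - β ^ 2)) ^ 2 ↔
        pd ≤ ((2 * α + β) * (∑ θ, P θ * D θ) / (2 * α ^ 2 - β ^ 2)) *
          (1 - Real.sqrt (1 -
            (2 * α - β) ^ 2 * ((∑ θ, P θ * D θ ^ 2) - (∑ θ, P θ * D θ) ^ 2) /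
              (4 * α ^ 2 * (∑ θ, P θ * D θ) ^ 2)))) := by
  intro pd _ hlt
  set E := ∑ θ, P θ * D θ
  set V := ∑ θ, P θ * D θ ^ 2 - E ^ 2
  set r := 1 - (2 * α - β) ^ 2 * V / (4 * α ^ 2 * E ^ 2)
  set k := (2 * α ^ 2 - β ^ 2) / (4 * α ^ 2 - β ^ 2)
  have hα : 0 < α := hβ.trans hαβ
  have h2ab : 0 < 2 * α - β := by linarith
  have hk : 0 < k := div_pos (by nlinarith) (by nlinarith)
  have hM : (2 * α + β) * E / (2 * α ^ 2 - β ^ 2) * k = E / (2 * α - β) := by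
    rw [div_mul_div_cancel₀ (by nlinarith), show 4 * α ^ 2 - β ^ 2 = (2 * α + β) * (2 * α - β) by
      ring, mul_div_mul_left _ _ (by positivity)]
  have hr : (E / (2 * α - β)) ^ 2 * r = (E / (2 * α - β)) ^ 2 - V / (4 * α ^ 2) := by
    simp only [r]
    field_simp
  have hlt' : pd * k < E / (2 * α - β) * (1 + √r) := by
    rwa [← hM, mul_right_comm, mul_lt_mul_iff_of_pos_right hk]
  have hscale : pd ≤ (2 * α + β) * E / (2 * α ^ 2 - β ^ 2) * (1 - √r) ↔
      pd * k ≤ E / (2 * α - β) * (1 - √r) := by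
    rw [← hM, mul_right_comm, mul_le_mul_iff_of_pos_right hk]
  rw [mul_div_assoc pd, sum_mul_margin_sq univ P D hPsum hα.ne' h2ab.ne', hscale,
    ← mul_le_sub_sq_iff_le_mul_one_sub_sqrt hlt', hr, mul_div_assoc, ← div_pow, mul_le_mul_iff_of_pos_left hα, sub_le_iff_le_add']

/-- Assume Var(D) ≤ E[D]²·4α²/(2α-β)². Then ISP₁'s equilibrium expected utility with
side payment p_d, namely α·E[(D(θ)/(2α) + βE[D]/(2α(2α-β)) - p_d(2α²-β²)/(4α²-β²))²],
is at least the no-collusion benchmark α·E[D]²/(2α-β)² if and only if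
p_d ≤ ((2α+β)E[D]/(2α²-β²))·(1 - √(1 - (2α-β)²Var(D)/(4α²E[D]²))), for side payments
below the larger root x₂ (where ISP₁'s margin stays nonnegative). -/
theorem stmt10 {Θ : Type*} [Fintype Θ] (P D : Θ → ℝ)
    (hP : ∀ θ, 0 ≤ P θ) (hPsum : ∑ θ, P θ = 1) (hD : ∀ θ, 0 ≤ D θ)
    (α β : ℝ) (hβ : 0 < β) (hαβ : β < α)
    (hED : 0 < ∑ θ, P θ * D θ)
    (hVar : (∑ θ, P θ * D θ ^ 2) - (∑ θ, P θ * D θ) ^ 2 ≤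
      (∑ θ, P θ * D θ) ^ 2 * (4 * α ^ 2) / (2 * α - β) ^ 2) :
    ∀ pd : ℝ, 0 ≤ pd →
      pd < ((2 * α + β) * (∑ θ, P θ * D θ) / (2 * α ^ 2 - β ^ 2)) *
          (1 + Real.sqrt (1 -
            (2 * α - β) ^ 2 * ((∑ θ, P θ * D θ ^ 2) - (∑ θ, P θ * D θ) ^ 2) /
              (4 * α ^ 2 * (∑ θ, P θ * D θ) ^ 2))) →
      (α * (∑ θ, P θ * D θ) ^ 2 / (2 * α - β) ^ 2 ≤
          α * ∑ θ, P θ *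
            ((D θ / (2 * α) +
                β * (∑ θ', P θ' * D θ') / (2 * α * (2 * α - β))) -
              pd * (2 * α ^ 2 - β ^ 2) / (4 * α ^ 2 - β ^ 2)) ^ 2 ↔
        pd ≤ ((2 * α + β) * (∑ θ, P θ * D θ) / (2 * α ^ 2 - β ^ 2)) *
          (1 - Real.sqrt (1 -
            (2 * α - β) ^ 2 * ((∑ θ, P θ * D θ ^ 2) - (∑ θ, P θ * D θ) ^ 2) /
              (4 * α ^ 2 * (∑ θ, P θ * D θ) ^ 2)))) :=
  stmt10_general P D hPsum α β hβ hαβ hED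
end

section
/- In the side-payment game, the CP's equilibrium expected utility exceeds its no-collusion equilibrium utility 2α E[D(θ)] p_a/(2α - β) if and only if 0 ≤ p_d ≤ E[D(θ)](4α² - β²)/((2α - β)(2α² - β²)) - ((2α² - β² - αβ)/(2α² - β²)) p_a. -/
/-! The CP's gain over the benchmark is `c · p_d · (T - p_d)` with `c = α(2α² - β²)/(4α² - β²) > 0`
and `T ≥ 0` the threshold: a downward parabola in `p_d` with roots `0` and `T`. -/

theorem mul_sub_nonneg_iff {R : Type*} [Ring R] [LinearOrder R] [IsStrictOrderedRing R]
    {t x : R} (ht : 0 ≤ t) : 0 ≤ x * (t - x) ↔ 0 ≤ x ∧ x ≤ t := by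
  rw [mul_nonneg_iff, sub_nonneg, sub_nonpos]
  refine ⟨?_, Or.inl⟩
  rintro (h | ⟨hx, htx⟩)
  · exact h
  · exact ⟨ht.trans htx, hx.trans ht⟩

theorem cp_utility_sub_benchmark {K : Type*} [Field K] {E α β pa pd : K} (hG : 2 * α - β ≠ 0)
    (hC : 2 * α ^ 2 - β ^ 2 ≠ 0) (hF : 4 * α ^ 2 - β ^ 2 ≠ 0) :
    2 * α * E * pa / (2 * α - β) - α * (2 * α ^ 2 - β ^ 2) / (4 * α ^ 2 - β ^ 2) * pd ^ 2 +
        (α * E / (2 * α - β) - α * (2 * α ^ 2 - β ^ 2 - α * β) * pa / (4 * α ^ 2 - β ^ 2)) * pd -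
      2 * α * E * pa / (2 * α - β) =
    α * (2 * α ^ 2 - β ^ 2) / (4 * α ^ 2 - β ^ 2) *
      (pd * (E * (4 * α ^ 2 - β ^ 2) / ((2 * α - β) * (2 * α ^ 2 - β ^ 2)) -
        (2 * α ^ 2 - β ^ 2 - α * β) / (2 * α ^ 2 - β ^ 2) * pa - pd)) := by
  -- a rational identity even with the three denominators treated as independent nonzero quantities
  generalize 2 * α - β = G at *
  generalize 2 * α ^ 2 - β ^ 2 = C at *
  generalize 4 * α ^ 2 - β ^ 2 = F at *
  field_simp
  ring

theorem stmt11_general {Θ : Type*} [Fintype Θ] (P D : Θ → ℝ)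
    (α β pa : ℝ) (hβ : 0 < β) (hαβ : β < α)
    (hupper : 0 ≤ (∑ θ, P θ * D θ) * (4 * α ^ 2 - β ^ 2) /
        ((2 * α - β) * (2 * α ^ 2 - β ^ 2)) -
      (2 * α ^ 2 - β ^ 2 - α * β) / (2 * α ^ 2 - β ^ 2) * pa) :
    ∀ pd : ℝ,
      (2 * α * (∑ θ, P θ * D θ) * pa / (2 * α - β) ≤
          2 * α * (∑ θ, P θ * D θ) * pa / (2 * α - β) -
            α * (2 * α ^ 2 - β ^ 2) / (4 * α ^ 2 - β ^ 2) * pd ^ 2 +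
            (α * (∑ θ, P θ * D θ) / (2 * α - β) -
              α * (2 * α ^ 2 - β ^ 2 - α * β) * pa / (4 * α ^ 2 - β ^ 2)) * pd) ↔
      (0 ≤ pd ∧
        pd ≤ (∑ θ, P θ * D θ) * (4 * α ^ 2 - β ^ 2) /
            ((2 * α - β) * (2 * α ^ 2 - β ^ 2)) -
          (2 * α ^ 2 - β ^ 2 - α * β) / (2 * α ^ 2 - β ^ 2) * pa) := by
  intro pd
  have hG : 0 < 2 * α - β := by linarith
  have hC : 0 < 2 * α ^ 2 - β ^ 2 := by nlinarith
  have hF : 0 < 4 * α ^ 2 - β ^ 2 := by nlinarith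
  have hcoeff : 0 < α * (2 * α ^ 2 - β ^ 2) / (4 * α ^ 2 - β ^ 2) :=
    div_pos (mul_pos (by linarith) hC) hF
  rw [← sub_nonneg, cp_utility_sub_benchmark hG.ne' hC.ne' hF.ne',
    mul_nonneg_iff_of_pos_left hcoeff, mul_sub_nonneg_iff hupper]

/-- In the side-payment game, the CP's equilibrium expected utility
2αE[D]p_a/(2α-β) - α(2α²-β²)p_d²/(4α²-β²) + (αE[D]/(2α-β) - α(2α²-β²-αβ)p_a/(4α²-β²))p_d
is at least its no-collusion benchmark 2αE[D]p_a/(2α-β) if and only if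
0 ≤ p_d ≤ E[D](4α²-β²)/((2α-β)(2α²-β²)) - ((2α²-β²-αβ)/(2α²-β²))p_a
(assuming this upper threshold is nonnegative). -/
theorem stmt11 {Θ : Type*} [Fintype Θ] (P D : Θ → ℝ)
    (hP : ∀ θ, 0 ≤ P θ) (hPsum : ∑ θ, P θ = 1) (hD : ∀ θ, 0 ≤ D θ)
    (α β pa : ℝ) (hβ : 0 < β) (hαβ : β < α) (hpa : 0 ≤ pa)
    (hupper : 0 ≤ (∑ θ, P θ * D θ) * (4 * α ^ 2 - β ^ 2) /
        ((2 * α - β) * (2 * α ^ 2 - β ^ 2)) -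
      (2 * α ^ 2 - β ^ 2 - α * β) / (2 * α ^ 2 - β ^ 2) * pa) :
    ∀ pd : ℝ,
      (2 * α * (∑ θ, P θ * D θ) * pa / (2 * α - β) ≤
          2 * α * (∑ θ, P θ * D θ) * pa / (2 * α - β) -
            α * (2 * α ^ 2 - β ^ 2) / (4 * α ^ 2 - β ^ 2) * pd ^ 2 +
            (α * (∑ θ, P θ * D θ) / (2 * α - β) -
              α * (2 * α ^ 2 - β ^ 2 - α * β) * pa / (4 * α ^ 2 - β ^ 2)) * pd) ↔
      (0 ≤ pd ∧
        pd ≤ (∑ θ, P θ * D θ) * (4 * α ^ 2 - β ^ 2) /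
            ((2 * α - β) * (2 * α ^ 2 - β ^ 2)) -
          (2 * α ^ 2 - β ^ 2 - α * β) / (2 * α ^ 2 - β ^ 2) * pa) :=
  stmt11_general P D α β pa hβ hαβ hupper
end

section
/- In the post-bargaining game with modified utilities Ū_1 = γ E[d_1(θ)(p_1(θ) + p_a)] for ISP_1 and U_2 = E[d_2(θ)] p_2 for ISP_2, the unique equilibrium is given by the side-payment equilibrium formulas with p_d replaced by −p_a, giving equilibrium expected utilities E[U_1] = γ α E[(D(θ)/(2α) + βE[D(θ)]/(2α(2α-β)) + (2α²-β²)p_a/(4α²-β²))²] and E[U_2] = α(E[D(θ)]/(2α-β) - αβ p_a/(4α²-β²))². -/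
/-- If `p` satisfies the first-order condition for the concave quadratic
`x ↦ (Dv - α x + b p₂)(x + pa)`, then `p` is a global maximizer. -/
lemma br_max {α b pa Dv p₂ p : ℝ} (hα : 0 < α) (hp : 2*α*p = Dv + b*p₂ - α*pa) (q : ℝ) :
    (Dv - α*q + b*p₂)*(q+pa) ≤ (Dv - α*p + b*p₂)*(p+pa) := by
  have key : (Dv - α*p + b*p₂)*(p+pa) - (Dv - α*q + b*p₂)*(q+pa) = α*(q-p)^2 := by
    linear_combination (q - p) * hp
  nlinarith [sq_nonneg (q-p), mul_nonneg hα.le (sq_nonneg (q-p))]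

/-- Conversely, if the value at `p` is at least the value at the first-order point `q`,
then `p = q` (strict concavity). -/
lemma br_eq {α b pa Dv p₂ p q : ℝ} (hα : 0 < α) (hq : 2*α*q = Dv + b*p₂ - α*pa)
    (h : (Dv - α*q + b*p₂)*(q+pa) ≤ (Dv - α*p + b*p₂)*(p+pa)) : p = q := by
  have hiden : α*(p-q)^2 = (Dv - α*q + b*p₂)*(q+pa) - (Dv - α*p + b*p₂)*(p+pa) := by
    linear_combination (q - p) * hq
  have h2 : α*(p-q)^2 ≤ 0 := by linarith
  have h3 : (p-q)^2 = 0 := le_antisymm (by nlinarith) (sq_nonneg _)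
  have h4 := pow_eq_zero_iff (n := 2) (by norm_num) |>.mp h3
  linarith


set_option maxHeartbeats 1000000 in
/-- Post-bargaining game with modified utilities: ISP₁ maximizes
γ·(D(θ) - αq + βp₂)(q + p_a) pointwise and ISP₂ maximizes E[(D(θ) - αq + βp₁(θ))]·q.
The unique equilibrium is given by the side-payment formulas with p_d replaced by -p_a:
p₁(θ) = D(θ)/(2α) + βE[D]/(2α(2α-β)) - 2α²p_a/(4α²-β²),
p₂ = E[D]/(2α-β) - αβp_a/(4α²-β²);
the equilibrium expected utilities are
E[U₁] = γ·α·E[(D(θ)/(2α) + βE[D]/(2α(2α-β)) + (2α²-β²)p_a/(4α²-β²))²] and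
E[U₂] = α·(E[D]/(2α-β) - αβp_a/(4α²-β²))². -/
theorem stmt14 {Θ : Type*} [Fintype Θ] (P D : Θ → ℝ)
    (hP : ∀ θ, 0 ≤ P θ) (hPsum : ∑ θ, P θ = 1) (hD : ∀ θ, 0 ≤ D θ)
    (α β pa γ : ℝ) (hβ : 0 < β) (hαβ : β < α) (hpa : 0 ≤ pa)
    (hγ0 : 0 < γ) (hγ1 : γ < 1)
    -- p_a small enough that the candidate equilibrium prices are nonnegative
    (hpos₁ : ∀ θ, 0 ≤ D θ / (2 * α) +
        β * (∑ θ', P θ' * D θ') / (2 * α * (2 * α - β)) -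
        2 * α ^ 2 * pa / (4 * α ^ 2 - β ^ 2))
    (hpos₂ : 0 ≤ (∑ θ', P θ' * D θ') / (2 * α - β) -
        α * β * pa / (4 * α ^ 2 - β ^ 2))
    (p₁ : Θ → ℝ) (p₂ : ℝ) (hp₁ : ∀ θ, 0 ≤ p₁ θ) (hp₂ : 0 ≤ p₂) :
    (((∀ θ, ∀ q, 0 ≤ q →
        γ * ((D θ - α * q + β * p₂) * (q + pa)) ≤
          γ * ((D θ - α * p₁ θ + β * p₂) * (p₁ θ + pa))) ∧
      (∀ q, 0 ≤ q → (∑ θ, P θ * (D θ - α * q + β * p₁ θ)) * q ≤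
          (∑ θ, P θ * (D θ - α * p₂ + β * p₁ θ)) * p₂)) ↔
      ((∀ θ, p₁ θ = D θ / (2 * α) +
          β * (∑ θ', P θ' * D θ') / (2 * α * (2 * α - β)) -
          2 * α ^ 2 * pa / (4 * α ^ 2 - β ^ 2)) ∧
        p₂ = (∑ θ', P θ' * D θ') / (2 * α - β) -
          α * β * pa / (4 * α ^ 2 - β ^ 2))) ∧
    (((∀ θ, p₁ θ = D θ / (2 * α) +
          β * (∑ θ', P θ' * D θ') / (2 * α * (2 * α - β)) -
          2 * α ^ 2 * pa / (4 * α ^ 2 - β ^ 2)) ∧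
        p₂ = (∑ θ', P θ' * D θ') / (2 * α - β) -
          α * β * pa / (4 * α ^ 2 - β ^ 2)) →
      (∑ θ, P θ * (γ * ((D θ - α * p₁ θ + β * p₂) * (p₁ θ + pa))) =
        γ * α * ∑ θ, P θ *
          (D θ / (2 * α) + β * (∑ θ', P θ' * D θ') / (2 * α * (2 * α - β)) +
            (2 * α ^ 2 - β ^ 2) * pa / (4 * α ^ 2 - β ^ 2)) ^ 2) ∧
      ((∑ θ, P θ * (D θ - α * p₂ + β * p₁ θ)) * p₂ =
        α * ((∑ θ', P θ' * D θ') / (2 * α - β) -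
          α * β * pa / (4 * α ^ 2 - β ^ 2)) ^ 2)) := by
  have hα : 0 < β := hβ
  have hα0 : 0 < α := hβ.trans hαβ
  have h2α : (2*α) ≠ 0 := by positivity
  have h2αβ : 0 < 2*α - β := by linarith
  have h4 : 0 < 4*α^2 - β^2 := by nlinarith
  set E := ∑ θ', P θ' * D θ' with hE
  set M := ∑ θ, P θ * p₁ θ with hM
  set c2 := E / (2*α - β) - α * β * pa / (4*α^2 - β^2) with hc2
  clear_value E M c2
  have hEnn : 0 ≤ E := hE ▸ Finset.sum_nonneg fun θ _ => mul_nonneg (hP θ) (hD θ)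
  have hMnn : 0 ≤ M := hM ▸ Finset.sum_nonneg fun θ _ => mul_nonneg (hP θ) (hp₁ θ)
  have key : ∀ q : ℝ, ∑ θ, P θ * (D θ - α * q + β * p₁ θ) = E - α*q + β*M := by
    intro q
    have h1 : ∑ θ, P θ * (D θ - α * q + β * p₁ θ)
        = ∑ θ, (P θ * D θ + (-(α*q)) * P θ + β * (P θ * p₁ θ)) :=
      Finset.sum_congr rfl fun θ _ => by ring
    rw [h1, Finset.sum_add_distrib, Finset.sum_add_distrib, ← Finset.mul_sum, ← Finset.mul_sum,
      hPsum, ← hE, ← hM]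
    ring
  have hId1 : ∀ d : ℝ, 2*α*(d / (2 * α) + β * E / (2 * α * (2 * α - β)) -
      2 * α ^ 2 * pa / (4 * α ^ 2 - β ^ 2)) = d + β*c2 - α*pa := by
    intro d
    rw [hc2]
    rw [show (4*α^2-β^2) = (2*α-β)*(2*α+β) by ring]; field_simp [h2αβ.ne', (by linarith : (0:ℝ) < 2*α+β).ne']
    ring
  have hc2id : c2 * (4*α^2 - β^2) = (2*α+β)*E - α*β*pa := by
    rw [hc2]; rw [show (4*α^2-β^2) = (2*α-β)*(2*α+β) by ring]; field_simp [h2αβ.ne', (by linarith : (0:ℝ) < 2*α+β).ne']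
  have hforms : (∀ θ, p₁ θ = D θ / (2 * α) + β * E / (2 * α * (2 * α - β)) -
        2 * α ^ 2 * pa / (4 * α ^ 2 - β ^ 2)) → p₂ = c2 →
      (∀ θ, 2*α*p₁ θ = D θ + β*p₂ - α*pa) ∧ 2*α*p₂ = E + β*M := by
    intro hf1 hf2
    have hMc : M = E/(2*α) + (β*E/(2*α*(2*α-β)) - 2*α^2*pa/(4*α^2-β^2)) := by
      have h1 : ∀ θ, P θ * p₁ θ = (P θ * D θ) * (1/(2*α)) +
          (β*E/(2*α*(2*α-β)) - 2*α^2*pa/(4*α^2-β^2)) * P θ := by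
        intro θ; rw [hf1 θ]; field_simp; ring
      rw [hM, Finset.sum_congr rfl (fun θ _ => h1 θ), Finset.sum_add_distrib,
        ← Finset.sum_mul, ← Finset.mul_sum, hPsum, ← hE, mul_one]
      ring
    refine ⟨fun θ => ?_, ?_⟩
    · rw [hf1 θ, hf2]; exact hId1 (D θ)
    · rw [hf2, hMc, hc2]; field_simp; ring
  constructor
  · constructor
    · rintro ⟨h1, h2⟩
      -- p₂ is the exact best response to M
      have hsnn : 0 ≤ (E + β*M)/(2*α) :=
        div_nonneg (by nlinarith [mul_nonneg hβ.le hMnn]) (by positivity)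
      have h2' := h2 _ hsnn
      rw [key, key] at h2'
      have hq0 : 2*α*((E + β*M)/(2*α)) = E + β*M - α*0 := by field_simp; ring
      have hble : (E - α*((E + β*M)/(2*α)) + β*M)*(((E + β*M)/(2*α)) + 0) ≤
          (E - α*p₂ + β*M)*(p₂ + 0) := by simpa using h2'
      have hb : p₂ = (E + β*M)/(2*α) := br_eq hα0 hq0 hble
      have hb' : 2*α*p₂ = E + β*M := by rw [hb]; field_simp
      -- each p₁ θ is at least the interior best response
      have ha : ∀ θ, D θ + β*p₂ - α*pa ≤ 2*α*p₁ θ := by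
        intro θ
        rcases le_or_gt (D θ + β*p₂ - α*pa) 0 with h0|h0
        · nlinarith [hp₁ θ]
        · have hqrel : 2*α*((D θ + β*p₂ - α*pa)/(2*α)) = D θ + β*p₂ - α*pa := by field_simp
          have hqs0 : 0 ≤ (D θ + β*p₂ - α*pa)/(2*α) := div_nonneg h0.le (by positivity)
          have h1'' := le_of_mul_le_mul_left (h1 θ _ hqs0) hγ0
          have heq := br_eq hα0 hqrel h1''
          rw [heq]; linarith [hqrel]
      -- aggregate
      have hMlow : E + β*p₂ - α*pa ≤ 2*α*M := by
        have hsum := Finset.sum_le_sum (s := Finset.univ)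
          (f := fun θ => P θ * (D θ + β*p₂ - α*pa)) (g := fun θ => P θ * (2*α*p₁ θ))
          (fun θ _ => mul_le_mul_of_nonneg_left (ha θ) (hP θ))
        have hL : ∑ θ, P θ * (D θ + β*p₂ - α*pa) = E + (β*p₂ - α*pa) := by
          have h1' : ∀ θ, P θ * (D θ + β*p₂ - α*pa)
              = P θ * D θ + (β*p₂ - α*pa)*P θ := fun θ => by ring
          rw [Finset.sum_congr rfl fun θ _ => h1' θ, Finset.sum_add_distrib,
            ← Finset.mul_sum, hPsum, ← hE]
          ring
        have hR : ∑ θ, P θ * (2*α*p₁ θ) = 2*α*M := by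
          rw [hM, Finset.mul_sum]
          exact Finset.sum_congr rfl fun θ _ => by ring
        rw [hL, hR] at hsum
        linarith
      -- p₂ is at least the candidate price
      have hM2 : β*M = 2*α*p₂ - E := by linarith
      have h6 : β*(E + β*p₂ - α*pa) ≤ 2*α*(2*α*p₂ - E) := by
        calc β*(E + β*p₂ - α*pa) ≤ β*(2*α*M) := mul_le_mul_of_nonneg_left hMlow hβ.le
          _ = 2*α*(β*M) := by ring
          _ = 2*α*(2*α*p₂ - E) := by rw [hM2]
      have hp2ge : c2 ≤ p₂ := by nlinarith [hc2id, h6, h4]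
      -- interior best responses everywhere
      have hnum : ∀ θ, 0 ≤ D θ + β*p₂ - α*pa := by
        intro θ
        have h9 : 0 ≤ 2*α*(D θ / (2 * α) + β * E / (2 * α * (2 * α - β)) -
            2 * α ^ 2 * pa / (4 * α ^ 2 - β ^ 2)) := mul_nonneg (by positivity) (hpos₁ θ)
        have h10 : 0 ≤ β*(p₂ - c2) := mul_nonneg hβ.le (by linarith)
        linarith [hId1 (D θ)]
      have heq1 : ∀ θ, 2*α*p₁ θ = D θ + β*p₂ - α*pa := by
        intro θ
        have hqrel : 2*α*((D θ + β*p₂ - α*pa)/(2*α)) = D θ + β*p₂ - α*pa := by field_simp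
        have hqs0 : 0 ≤ (D θ + β*p₂ - α*pa)/(2*α) := div_nonneg (hnum θ) (by positivity)
        have h1'' := le_of_mul_le_mul_left (h1 θ _ hqs0) hγ0
        have heq := br_eq hα0 hqrel h1''
        rw [heq]; exact hqrel
      have hMeq : 2*α*M = E + (β*p₂ - α*pa) := by
        have hsum : ∑ θ, P θ * (2*α*p₁ θ) = ∑ θ, P θ * (D θ + β*p₂ - α*pa) :=
          Finset.sum_congr rfl fun θ _ => by rw [heq1 θ]
        have hL : ∑ θ, P θ * (D θ + β*p₂ - α*pa) = E + (β*p₂ - α*pa) := by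
          have h1' : ∀ θ, P θ * (D θ + β*p₂ - α*pa)
              = P θ * D θ + (β*p₂ - α*pa)*P θ := fun θ => by ring
          rw [Finset.sum_congr rfl fun θ _ => h1' θ, Finset.sum_add_distrib,
            ← Finset.mul_sum, hPsum, ← hE]
          ring
        have hR : ∑ θ, P θ * (2*α*p₁ θ) = 2*α*M := by
          rw [hM, Finset.mul_sum]
          exact Finset.sum_congr rfl fun θ _ => by ring
        rw [hL, hR] at hsum
        exact hsum
      have h11 : p₂ * (4*α^2 - β^2) = (2*α+β)*E - α*β*pa := by
        linear_combination (2*α)*hb' + β*hMeq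
      have hfinal2 : p₂ = c2 := by
        have h12 : p₂ * (4*α^2 - β^2) = c2 * (4*α^2 - β^2) := by rw [h11]; exact hc2id.symm
        exact mul_right_cancel₀ h4.ne' h12
      refine ⟨fun θ => ?_, hfinal2⟩
      have h13 := heq1 θ
      rw [hfinal2] at h13
      have h14 := hId1 (D θ)
      have h15 : 2*α*p₁ θ = 2*α*(D θ / (2 * α) + β * E / (2 * α * (2 * α - β)) -
          2 * α ^ 2 * pa / (4 * α ^ 2 - β ^ 2)) := by rw [h13, h14]
      exact mul_left_cancel₀ h2α h15
    · rintro ⟨hf1, hf2⟩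
      obtain ⟨hl1, hl2⟩ := hforms hf1 hf2
      constructor
      · intro θ q hq
        exact mul_le_mul_of_nonneg_left (br_max hα0 (hl1 θ) q) hγ0.le
      · intro q hq
        rw [key q, key p₂]
        have hp0 : 2*α*p₂ = E + β*M - α*0 := by rw [hl2]; ring
        simpa using br_max hα0 hp0 q
  · rintro ⟨hf1, hf2⟩
    obtain ⟨hl1, hl2⟩ := hforms hf1 hf2
    constructor
    · have hg : ∀ θ, p₁ θ + pa = D θ / (2 * α) + β * E / (2 * α * (2 * α - β)) +
          (2 * α ^ 2 - β ^ 2) * pa / (4 * α ^ 2 - β ^ 2) := by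
        intro θ; rw [hf1 θ]; rw [show (4*α^2-β^2) = (2*α-β)*(2*α+β) by ring]; field_simp [h2αβ.ne', (by linarith : (0:ℝ) < 2*α+β).ne']; ring
      rw [Finset.mul_sum]
      apply Finset.sum_congr rfl
      intro θ _
      have hA : D θ - α * p₁ θ + β * p₂ = α*(p₁ θ + pa) := by linarith [hl1 θ]
      rw [hA, hg θ]
      ring
    · rw [key p₂, hf2]
      rw [hf2] at hl2
      linear_combination (-c2) * hl2
end
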